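/- Let σ : ℝ → ℝ be continuous with dim*(σ, X) < ∞, where X vertically stacks Z_1,…,Z_s. Consider the sparse-dense nonlinear loss L(U_1,…,U_s,W_1,…,W_s) = (1/2)‖Σ_{i=1}^s U_i σ(W_i Z_i) − Y‖_F². If p_i ≥ dim*(σ, Z_i) for every i ∈ {1,…,s}, then L has no spurious valleys: there is no path-connected component T of a sublevel set {θ : L(θ) ≤ α} with inf_{θ∈T} L(θ) > inf L. -/

import Mathlib

open scoped BigOperators Matrix

/-- Squared Frobenius norm of a real matrix. -/
noncomputable def frobSq {m n : Type*} [Fintype m] [Fintype n] (M : Matrix m n ℝ) : ℝ :=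
  ∑ i, ∑ j, (M i j) ^ 2

/-- `V_σ(Z) = span{ (σ(wᵀz₁),…,σ(wᵀzₙ)) : w }`, the span of attainable hidden-unit
activation patterns on the columns of `Z`. -/
noncomputable def actSpan {ι : Type*} [Fintype ι] {n : ℕ} (σ : ℝ → ℝ)
    (Z : Matrix ι (Fin n) ℝ) : Submodule ℝ (Fin n → ℝ) :=
  Submodule.span ℝ (Set.range fun w : ι → ℝ => fun j : Fin n => σ (∑ k, w k * Z k j))

/-- The upper intrinsic dimension `dim*(σ, Z) = dim V_σ(Z)`. -/
noncomputable def dimStar {ι : Type*} [Fintype ι] {n : ℕ} (σ : ℝ → ℝ)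
    (Z : Matrix ι (Fin n) ℝ) : ℕ :=
  Module.finrank ℝ (actSpan σ Z)


section Sums

lemma sum_row_elim {P : Type*} [Fintype P] [DecidableEq P] (m u c : P → ℝ) (r0 : P)
    (hc0 : c r0 = 0) (hm : m r0 = ∑ r, c r * m r) :
    ∑ r, (if r = r0 then 0 else u r + c r * u r0) * m r = ∑ r, u r * m r := by
  rw [← Finset.sum_erase_add _ _ (Finset.mem_univ r0),
    ← Finset.sum_erase_add _ (fun r => u r * m r) (Finset.mem_univ r0)]
  simp only [if_pos rfl, zero_mul, add_zero]
  have herase : ∀ r ∈ Finset.univ.erase r0,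
      (if r = r0 then 0 else u r + c r * u r0) * m r = u r * m r + u r0 * (c r * m r) := by
    intro r hr; rw [if_neg (Finset.ne_of_mem_erase hr)]; ring
  rw [Finset.sum_congr rfl herase, Finset.sum_add_distrib]
  have hsum : ∑ r ∈ Finset.univ.erase r0, c r * m r = m r0 := by
    have h2 : ∑ r ∈ Finset.univ.erase r0, c r * m r + c r0 * m r0 = ∑ r, c r * m r :=
      Finset.sum_erase_add _ _ (Finset.mem_univ r0)
    rw [hc0, zero_mul, add_zero] at h2
    rw [h2, ← hm]
  rw [← Finset.mul_sum, hsum]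
  simp

lemma exists_dep_comb {ι : Type*} [Fintype ι] [DecidableEq ι] {V' : Type*} [AddCommGroup V']
    [Module ℝ V'] {m : ι → V'} (h : ¬ LinearIndependent ℝ m) :
    ∃ (r0 : ι) (c : ι → ℝ), c r0 = 0 ∧ m r0 = ∑ r, c r • m r := by
  obtain ⟨g, hg, r0, hr0⟩ := Fintype.not_linearIndependent_iff.1 h
  refine ⟨r0, fun r => if r = r0 then 0 else -(g r / g r0), if_pos rfl, ?_⟩
  have h2 : ∑ r ∈ Finset.univ.erase r0, g r • m r + g r0 • m r0 = ∑ r, g r • m r :=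
    Finset.sum_erase_add _ _ (Finset.mem_univ r0)
  rw [hg] at h2
  have h1 : ∑ r ∈ Finset.univ.erase r0, g r • m r = -(g r0 • m r0) :=
    eq_neg_of_add_eq_zero_left h2
  have h3 : ∑ r, (if r = r0 then 0 else -(g r / g r0)) • m r
      = ∑ r ∈ Finset.univ.erase r0, (-(g r0)⁻¹ * g r) • m r := by
    rw [← Finset.sum_erase_add _ _ (Finset.mem_univ r0), if_pos rfl, zero_smul, add_zero]
    refine Finset.sum_congr rfl fun r hr => ?_
    rw [if_neg (Finset.ne_of_mem_erase hr)]
    congr 1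
    field_simp
  rw [h3]
  have h4 : ∑ r ∈ Finset.univ.erase r0, (-(g r0)⁻¹ * g r) • m r
      = (-(g r0)⁻¹) • ∑ r ∈ Finset.univ.erase r0, g r • m r := by
    rw [Finset.smul_sum]
    exact Finset.sum_congr rfl fun r _ => by rw [smul_smul]
  rw [h4, h1, smul_neg, neg_smul, neg_neg, smul_smul, inv_mul_cancel₀ hr0, one_smul]

end Sums


lemma segment_joinedIn {E : Type*} [AddCommGroup E] [Module ℝ E] [TopologicalSpace E]
    [ContinuousAdd E] [ContinuousSMul ℝ E] {S : Set E} {a b : E}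
    (h : ∀ t : ℝ, 0 ≤ t → t ≤ 1 → (1 - t) • a + t • b ∈ S) : JoinedIn S a b := by
  refine ⟨⟨⟨fun t => (1 - (t : ℝ)) • a + (t : ℝ) • b, ?_⟩, ?_, ?_⟩, ?_⟩
  · exact ((continuous_const.sub continuous_subtype_val).smul continuous_const).add
      (continuous_subtype_val.smul continuous_const)
  · simp
  · simp
  · intro t; exact h t t.2.1 t.2.2

lemma frobSq_nonneg {m n' : Type*} [Fintype m] [Fintype n'] (M : Matrix m n' ℝ) :
    0 ≤ frobSq M :=
  Finset.sum_nonneg fun _ _ => Finset.sum_nonneg fun _ _ => sq_nonneg _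

lemma frobSq_convex {m n' : Type*} [Fintype m] [Fintype n'] (A B : Matrix m n' ℝ) {t : ℝ}
    (h0 : 0 ≤ t) (h1 : t ≤ 1) :
    frobSq ((1 - t) • A + t • B) ≤ (1 - t) * frobSq A + t * frobSq B := by
  unfold frobSq
  rw [Finset.mul_sum, Finset.mul_sum, ← Finset.sum_add_distrib]
  refine Finset.sum_le_sum fun i _ => ?_
  rw [Finset.mul_sum, Finset.mul_sum, ← Finset.sum_add_distrib]
  refine Finset.sum_le_sum fun j _ => ?_
  simp only [Matrix.add_apply, Matrix.smul_apply, smul_eq_mul]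
  nlinarith [mul_nonneg (mul_nonneg h0 (sub_nonneg.2 h1)) (sq_nonneg (A i j - B i j))]

lemma convex_comb_self {E : Type*} [AddCommGroup E] [Module ℝ E] (x : E) (t : ℝ) :
    (1 - t) • x + t • x = x := by
  rw [← add_smul]; simp

section SD
variable {s n dy : ℕ} {p d : Fin s → ℕ}

abbrev PS (s dy : ℕ) (p d : Fin s → ℕ) : Type :=
  ((i : Fin s) → Fin dy → Fin (p i) → ℝ) × ((i : Fin s) → Fin (p i) → Fin (d i) → ℝ)

variable (σ : ℝ → ℝ) (Z : (i : Fin s) → Matrix (Fin (d i)) (Fin n) ℝ)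

noncomputable def vvec (i : Fin s) (w : Fin (d i) → ℝ) : Fin n → ℝ :=
  fun j => σ (∑ k, w k * Z i k j)

noncomputable def rowSpan (i : Fin s) (Wi : Fin (p i) → Fin (d i) → ℝ) :
    Submodule ℝ (Fin n → ℝ) :=
  Submodule.span ℝ (Set.range fun r => vvec σ Z i (Wi r))

noncomputable def Fm (dy : ℕ) (p : Fin s → ℕ) (θ : PS s dy p d) :
    Matrix (Fin dy) (Fin n) ℝ :=
  Matrix.of fun a j => ∑ i, ∑ r, θ.1 i a r * vvec σ Z i (θ.2 i r) j

lemma Fm_eq_matrix (θ : PS s dy p d) :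
    (∑ i, Matrix.of (θ.1 i) * (Matrix.of (θ.2 i) * Z i).map σ) = Fm σ Z dy p θ := by
  ext a j
  simp [Fm, Matrix.sum_apply, Matrix.mul_apply, Matrix.map_apply, vvec]

noncomputable def Lf (Y : Matrix (Fin dy) (Fin n) ℝ) (θ : PS s dy p d) : ℝ :=
  (1 / 2) * frobSq (Fm σ Z dy p θ - Y)

lemma vvec_mem_actSpan (i : Fin s) (w : Fin (d i) → ℝ) : vvec σ Z i w ∈ actSpan σ (Z i) :=
  Submodule.subset_span ⟨w, rfl⟩

lemma rowSpan_le (i : Fin s) (Wi : Fin (p i) → Fin (d i) → ℝ) :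
    rowSpan σ Z i Wi ≤ actSpan σ (Z i) :=
  Submodule.span_le.2 (Set.range_subset_iff.2 fun r => vvec_mem_actSpan σ Z i (Wi r))

lemma Fm_fst_affine (U U' : (i : Fin s) → Fin dy → Fin (p i) → ℝ)
    (W : (i : Fin s) → Fin (p i) → Fin (d i) → ℝ) (t : ℝ) :
    Fm σ Z dy p ((1 - t) • U + t • U', W)
      = (1 - t) • Fm σ Z dy p (U, W) + t • Fm σ Z dy p (U', W) := by
  ext a j
  simp only [Fm, Matrix.of_apply, Matrix.add_apply, Matrix.smul_apply, smul_eq_mul,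
    Pi.add_apply, Pi.smul_apply, Finset.mul_sum]
  rw [← Finset.sum_add_distrib]
  refine Finset.sum_congr rfl fun i _ => ?_
  rw [← Finset.sum_add_distrib]
  exact Finset.sum_congr rfl fun r _ => by ring

lemma Fm_snd_congr (U : (i : Fin s) → Fin dy → Fin (p i) → ℝ)
    (W W' : (i : Fin s) → Fin (p i) → Fin (d i) → ℝ)
    (h : ∀ i r, (∀ a, U i a r = 0) ∨ vvec σ Z i (W' i r) = vvec σ Z i (W i r)) :
    Fm σ Z dy p (U, W') = Fm σ Z dy p (U, W) := by
  ext a j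
  simp only [Fm, Matrix.of_apply]
  refine Finset.sum_congr rfl fun i _ => Finset.sum_congr rfl fun r _ => ?_
  rcases h i r with h0 | hv
  · rw [h0 a, zero_mul, zero_mul]
  · rw [hv]

lemma Lf_congr (Y : Matrix (Fin dy) (Fin n) ℝ) {θ θ' : PS s dy p d}
    (h : Fm σ Z dy p θ = Fm σ Z dy p θ') : Lf σ Z Y θ = Lf σ Z Y θ' := by
  rw [Lf, Lf, h]

lemma prod_comb {A B : Type*} [AddCommGroup A] [AddCommGroup B] [Module ℝ A] [Module ℝ B]
    (a b : A) (x y : B) (t : ℝ) :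
    (1 - t) • ((a, x) : A × B) + t • (b, y) = ((1 - t) • a + t • b, (1 - t) • x + t • y) := rfl

end SD

section SD2
variable {s n dy : ℕ} {p d : Fin s → ℕ}
variable (σ : ℝ → ℝ) (Z : (i : Fin s) → Matrix (Fin (d i)) (Fin n) ℝ)
variable (Y : Matrix (Fin dy) (Fin n) ℝ)

lemma Lf_fst_convex (U U' : (i : Fin s) → Fin dy → Fin (p i) → ℝ)
    (W : (i : Fin s) → Fin (p i) → Fin (d i) → ℝ) {t : ℝ} (h0 : 0 ≤ t) (h1 : t ≤ 1) :
    Lf σ Z Y ((1 - t) • U + t • U', W)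
      ≤ (1 - t) * Lf σ Z Y (U, W) + t * Lf σ Z Y (U', W) := by
  have hE : Fm σ Z dy p ((1 - t) • U + t • U', W) - Y
      = (1 - t) • (Fm σ Z dy p (U, W) - Y) + t • (Fm σ Z dy p (U', W) - Y) := by
    rw [Fm_fst_affine]; module
  rw [Lf, hE, Lf, Lf]
  have h := frobSq_convex (Fm σ Z dy p (U, W) - Y) (Fm σ Z dy p (U', W) - Y) h0 h1
  linarith

lemma fill (i0 : Fin s) (hpi : Module.finrank ℝ (actSpan σ (Z i0)) ≤ p i0) :
    ∀ (k : ℕ) (θ : PS s dy p d),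
      Module.finrank ℝ (actSpan σ (Z i0)) - Module.finrank ℝ (rowSpan σ Z i0 (θ.2 i0)) ≤ k →
      ∃ θ' : PS s dy p d,
        JoinedIn {η | Lf σ Z Y η ≤ Lf σ Z Y θ} θ θ' ∧
        Fm σ Z dy p θ' = Fm σ Z dy p θ ∧
        (∀ j, j ≠ i0 → θ'.1 j = θ.1 j) ∧
        (∀ j, j ≠ i0 → θ'.2 j = θ.2 j) ∧
        actSpan σ (Z i0) ≤ rowSpan σ Z i0 (θ'.2 i0) := by
  intro k
  induction k with
  | zero =>
    intro θ hk
    by_cases hVS : actSpan σ (Z i0) ≤ rowSpan σ Z i0 (θ.2 i0)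
    · exact ⟨θ, JoinedIn.refl (show _ ≤ Lf σ Z Y θ from le_refl _), rfl, fun _ _ => rfl, fun _ _ => rfl, hVS⟩
    · exfalso
      have hlt : rowSpan σ Z i0 (θ.2 i0) < actSpan σ (Z i0) :=
        lt_of_le_of_ne (rowSpan_le σ Z i0 (θ.2 i0)) fun h => hVS h.ge
      have hrk := Submodule.finrank_lt_finrank_of_lt hlt
      omega
  | succ k ih =>
    intro θ hk
    by_cases hVS : actSpan σ (Z i0) ≤ rowSpan σ Z i0 (θ.2 i0)
    · exact ⟨θ, JoinedIn.refl (show _ ≤ Lf σ Z Y θ from le_refl _), rfl, fun _ _ => rfl, fun _ _ => rfl, hVS⟩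
    have hlt : rowSpan σ Z i0 (θ.2 i0) < actSpan σ (Z i0) :=
      lt_of_le_of_ne (rowSpan_le σ Z i0 (θ.2 i0)) fun h => hVS h.ge
    have hrk := Submodule.finrank_lt_finrank_of_lt hlt
    have hSp : Module.finrank ℝ (rowSpan σ Z i0 (θ.2 i0)) < p i0 := lt_of_lt_of_le hrk hpi
    set m : Fin (p i0) → (Fin n → ℝ) := fun r => vvec σ Z i0 (θ.2 i0 r) with hmdef
    have hnli : ¬ LinearIndependent ℝ m := by
      intro hli
      have hcard := finrank_span_eq_card hli
      rw [Fintype.card_fin] at hcard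
      have : rowSpan σ Z i0 (θ.2 i0) = Submodule.span ℝ (Set.range m) := rfl
      rw [this, hcard] at hSp
      omega
    obtain ⟨r0, c, hc0, hm⟩ := exists_dep_comb hnli
    have hmj : ∀ j, m r0 j = ∑ r, c r * m r j := by
      intro j
      have := congrFun hm j
      simpa [Finset.sum_apply] using this
    -- a generator outside the current row span
    have hw : ∃ w : Fin (d i0) → ℝ, vvec σ Z i0 w ∉ rowSpan σ Z i0 (θ.2 i0) := by
      by_contra h
      push_neg at h
      exact hVS (Submodule.span_le.2 (Set.range_subset_iff.2 fun w => h w))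
    obtain ⟨wst, hwst⟩ := hw
    set U' : (i : Fin s) → Fin dy → Fin (p i) → ℝ :=
      Function.update θ.1 i0 (fun a r => if r = r0 then 0 else θ.1 i0 a r + c r * θ.1 i0 a r0)
      with hU'def
    have hU'r0 : ∀ a, U' i0 a r0 = 0 := by
      intro a; rw [hU'def]; simp
    have hU'ne : ∀ j, j ≠ i0 → U' j = θ.1 j := by
      intro j hj; rw [hU'def, Function.update_of_ne hj]
    have hFmU : Fm σ Z dy p (U', θ.2) = Fm σ Z dy p θ := by
      have : Fm σ Z dy p θ = Fm σ Z dy p (θ.1, θ.2) := by rw [Prod.mk.eta]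
      rw [this]
      ext a j
      simp only [Fm, Matrix.of_apply]
      refine Finset.sum_congr rfl fun i _ => ?_
      by_cases hi : i = i0
      · subst hi
        rw [hU'def]
        simp only [Function.update_self]
        exact sum_row_elim (fun r => m r j) (fun r => θ.1 i a r) c r0 hc0 (hmj j)
      · rw [hU'ne i hi]
    set W' : (i : Fin s) → Fin (p i) → Fin (d i) → ℝ :=
      Function.update θ.2 i0 (Function.update (θ.2 i0) r0 wst) with hW'def
    have hW'ne : ∀ j, j ≠ i0 → W' j = θ.2 j := by
      intro j hj; rw [hW'def, Function.update_of_ne hj]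
    have hW'r : ∀ r, r ≠ r0 → W' i0 r = θ.2 i0 r := by
      intro r hr; rw [hW'def, Function.update_self, Function.update_of_ne hr]
    have hW'r0 : W' i0 r0 = wst := by
      rw [hW'def, Function.update_self, Function.update_self]
    have hFmW : Fm σ Z dy p (U', W') = Fm σ Z dy p (U', θ.2) := by
      refine Fm_snd_congr σ Z U' θ.2 W' fun i r => ?_
      by_cases hi : i = i0
      · subst hi
        by_cases hr : r = r0
        · subst hr; exact Or.inl hU'r0
        · exact Or.inr (by rw [hW'r r hr])
      · exact Or.inr (by rw [hW'ne i hi])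
    -- the row span strictly increases
    have hS'mem : vvec σ Z i0 wst ∈ rowSpan σ Z i0 (W' i0) :=
      Submodule.subset_span ⟨r0, by simp only [hW'r0]⟩
    have hSle : rowSpan σ Z i0 (θ.2 i0) ≤ rowSpan σ Z i0 (W' i0) := by
      refine Submodule.span_le.2 (Set.range_subset_iff.2 fun r => ?_)
      by_cases hr : r = r0
      · show m r ∈ _
        rw [hr, hm]
        refine Submodule.sum_mem _ fun q _ => ?_
        by_cases hq : q = r0
        · rw [hq, hc0, zero_smul]; exact Submodule.zero_mem _
        · exact Submodule.smul_mem _ _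
            (Submodule.subset_span ⟨q, by simp only [hW'r q hq, hmdef]⟩)
      · exact Submodule.subset_span ⟨r, by simp only [hW'r r hr]⟩
    have hSlt : rowSpan σ Z i0 (θ.2 i0) < rowSpan σ Z i0 (W' i0) :=
      lt_of_le_of_ne hSle fun h => hwst (h ▸ hS'mem)
    have hrk' := Submodule.finrank_lt_finrank_of_lt hSlt
    have hmeas : Module.finrank ℝ (actSpan σ (Z i0))
        - Module.finrank ℝ (rowSpan σ Z i0 ((U', W').2 i0)) ≤ k := by
      simp only
      omega
    obtain ⟨θ'', hJ'', hFm'', hU'', hW'', hspan''⟩ := ih (U', W') hmeas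
    -- segment 1 : θ to (U', θ.2), with constant loss
    have seg1 : JoinedIn {η | Lf σ Z Y η ≤ Lf σ Z Y θ} θ (U', θ.2) := by
      refine segment_joinedIn fun t h0 h1 => ?_
      have hpt : (1 - t) • θ + t • ((U', θ.2) : PS s dy p d)
          = ((1 - t) • θ.1 + t • U', θ.2) := by
        refine Prod.ext rfl ?_
        show (1 - t) • θ.2 + t • θ.2 = θ.2
        exact convex_comb_self θ.2 t
      rw [Set.mem_setOf_eq, hpt]
      have hfm : Fm σ Z dy p ((1 - t) • θ.1 + t • U', θ.2) = Fm σ Z dy p θ := by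
        rw [Fm_fst_affine, hFmU]
        have : Fm σ Z dy p (θ.1, θ.2) = Fm σ Z dy p θ := by rw [Prod.mk.eta]
        rw [this, convex_comb_self]
      exact le_of_eq (Lf_congr σ Z Y hfm)
    -- segment 2 : (U', θ.2) to (U', W'), with constant loss
    have seg2 : JoinedIn {η | Lf σ Z Y η ≤ Lf σ Z Y θ} (U', θ.2) (U', W') := by
      refine segment_joinedIn fun t h0 h1 => ?_
      have hpt : (1 - t) • ((U', θ.2) : PS s dy p d) + t • ((U', W') : PS s dy p d)
          = (U', (1 - t) • θ.2 + t • W') := by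
        refine Prod.ext ?_ rfl
        show (1 - t) • U' + t • U' = U'
        exact convex_comb_self U' t
      rw [Set.mem_setOf_eq, hpt]
      have hfm : Fm σ Z dy p (U', (1 - t) • θ.2 + t • W') = Fm σ Z dy p θ := by
        rw [← hFmU]
        refine Fm_snd_congr σ Z U' θ.2 _ fun i r => ?_
        by_cases hi : i = i0
        · subst hi
          by_cases hr : r = r0
          · subst hr; exact Or.inl hU'r0
          · refine Or.inr ?_
            have h5 : ((1 - t) • θ.2 + t • W') i r = θ.2 i r := by
              funext kk
              simp only [Pi.add_apply, Pi.smul_apply, smul_eq_mul, hW'r r hr]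
              ring
            rw [h5]
        · refine Or.inr ?_
          have h5 : ((1 - t) • θ.2 + t • W') i r = θ.2 i r := by
            funext kk
            simp only [Pi.add_apply, Pi.smul_apply, smul_eq_mul, hW'ne i hi]
            ring
          rw [h5]
      exact le_of_eq (Lf_congr σ Z Y hfm)
    have hLeq : Lf σ Z Y ((U', W') : PS s dy p d) = Lf σ Z Y θ :=
      Lf_congr σ Z Y (hFmW.trans hFmU)
    have seg3 : JoinedIn {η | Lf σ Z Y η ≤ Lf σ Z Y θ} (U', W') θ'' := by
      rw [← hLeq]; exact hJ''
    refine ⟨θ'', (seg1.trans seg2).trans seg3, hFm''.trans (hFmW.trans hFmU),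
      fun j hj => ?_, fun j hj => ?_, hspan''⟩
    · rw [hU'' j hj]; exact hU'ne j hj
    · rw [hW'' j hj]; exact hW'ne j hj


lemma fillAll (hp' : ∀ i, Module.finrank ℝ (actSpan σ (Z i)) ≤ p i) (θ0 : PS s dy p d) :
    ∀ T : Finset (Fin s), ∃ θ1 : PS s dy p d,
      JoinedIn {η | Lf σ Z Y η ≤ Lf σ Z Y θ0} θ0 θ1 ∧
      Fm σ Z dy p θ1 = Fm σ Z dy p θ0 ∧
      ∀ i ∈ T, actSpan σ (Z i) ≤ rowSpan σ Z i (θ1.2 i) := by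
  intro T
  induction T using Finset.induction_on with
  | empty =>
    exact ⟨θ0, JoinedIn.refl (show _ ≤ Lf σ Z Y θ0 from le_refl _), rfl, by simp⟩
  | @insert i0 T hi0 ihT =>
    obtain ⟨θ1, hJ1, hFm1, hsp1⟩ := ihT
    obtain ⟨θ2, hJ2, hFm2, hU2, hW2, hsp2⟩ :=
      fill σ Z Y i0 (hp' i0) (Module.finrank ℝ (actSpan σ (Z i0))) θ1 (Nat.sub_le _ _)
    have hLf1 : Lf σ Z Y θ1 = Lf σ Z Y θ0 := Lf_congr σ Z Y hFm1
    have hJ2' : JoinedIn {η | Lf σ Z Y η ≤ Lf σ Z Y θ0} θ1 θ2 := hLf1 ▸ hJ2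
    refine ⟨θ2, hJ1.trans hJ2', hFm2.trans hFm1, fun i hiT => ?_⟩
    rcases Finset.mem_insert.1 hiT with rfl | hiT'
    · exact hsp2
    · have hne : i ≠ i0 := by rintro rfl; exact hi0 hiT'
      have h6 : θ2.2 i = θ1.2 i := hW2 i hne
      rw [h6]
      exact hsp1 i hiT'

end SD2

/-- For a continuous activation `σ` with `dim*(σ, X) < ∞` (where `X`
vertically stacks `Z₁,…,Z_s`), the sparse-dense nonlinear loss
`L = (1/2)‖∑ᵢ Uᵢ σ(Wᵢ Zᵢ) − Y‖_F²` has no spurious valleys whenever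
`pᵢ ≥ dim*(σ, Zᵢ)` for every `i`. -/
theorem sd_nonlinear_polylike_no_spurious_valleys
    (s n dy : ℕ) (p d : Fin s → ℕ)
    (σ : ℝ → ℝ) (hσ : Continuous σ)
    (Z : (i : Fin s) → Matrix (Fin (d i)) (Fin n) ℝ)
    (Y : Matrix (Fin dy) (Fin n) ℝ)
    -- `dim*(σ, X) < ∞` for the vertically stacked data matrix `X`
    (hfin : FiniteDimensional ℝ
      (actSpan σ (Matrix.of fun (b : (i : Fin s) × Fin (d i)) (j : Fin n) => Z b.1 b.2 j)))
    (hp : ∀ i, dimStar σ (Z i) ≤ p i)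
    (L : (((i : Fin s) → Fin dy → Fin (p i) → ℝ) ×
          ((i : Fin s) → Fin (p i) → Fin (d i) → ℝ)) → ℝ)
    (hL : ∀ θ, L θ = (1 / 2) * frobSq
      ((∑ i, Matrix.of (θ.1 i) * (Matrix.of (θ.2 i) * Z i).map σ) - Y)) :
    ∀ (α : ℝ) θ0, L θ0 ≤ α →
      ¬ (⨅ θ, L θ) < sInf (L '' pathComponentIn {θ | L θ ≤ α} θ0) := by
  have hLeq : L = Lf σ Z Y := funext fun θ => by rw [hL θ, Lf, Fm_eq_matrix]
  subst hLeq
  intro α θ0 hθ0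
  rw [not_lt]
  have hp' : ∀ i, Module.finrank ℝ (actSpan σ (Z i)) ≤ p i := hp
  have hLf0 : ∀ θ : PS s dy p d, 0 ≤ Lf σ Z Y θ := fun θ =>
    mul_nonneg (by norm_num) (frobSq_nonneg _)
  refine le_ciInf fun θstar => ?_
  have hkey : ∃ θ', θ' ∈ pathComponentIn {θ : PS s dy p d | Lf σ Z Y θ ≤ α} θ0 ∧
      Lf σ Z Y θ' ≤ Lf σ Z Y θstar := by
    by_cases hc : Lf σ Z Y θstar < Lf σ Z Y θ0
    · obtain ⟨θ1, hJ1, hFm1, hsp⟩ := fillAll σ Z Y hp' θ0 Finset.univ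
      have hrow : ∀ i (r : Fin (p i)), vvec σ Z i (θstar.2 i r) ∈ rowSpan σ Z i (θ1.2 i) :=
        fun i r => hsp i (Finset.mem_univ i) (vvec_mem_actSpan σ Z i _)
      have hex : ∀ i (r : Fin (p i)), ∃ cc : Fin (p i) → ℝ,
          ∑ r', cc r' • vvec σ Z i (θ1.2 i r') = vvec σ Z i (θstar.2 i r) :=
        fun i r => (Submodule.mem_span_range_iff_exists_fun ℝ).1 (hrow i r)
      choose C hC using hex
      set Ut : (i : Fin s) → Fin dy → Fin (p i) → ℝ :=
        fun i a r' => ∑ r, θstar.1 i a r * C i r r' with hUtdef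
      have hFmUt : Fm σ Z dy p (Ut, θ1.2) = Fm σ Z dy p θstar := by
        ext a j
        simp only [Fm, Matrix.of_apply]
        refine Finset.sum_congr rfl fun i _ => ?_
        have hCj : ∀ r, ∑ r', C i r r' * vvec σ Z i (θ1.2 i r') j
            = vvec σ Z i (θstar.2 i r) j := by
          intro r
          have h7 := congrFun (hC i r) j
          simpa [Finset.sum_apply] using h7
        calc ∑ r', Ut i a r' * vvec σ Z i (θ1.2 i r') j
            = ∑ r', ∑ r, θstar.1 i a r * (C i r r' * vvec σ Z i (θ1.2 i r') j) := by
              refine Finset.sum_congr rfl fun r' _ => ?_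
              rw [hUtdef]
              simp only
              rw [Finset.sum_mul]
              exact Finset.sum_congr rfl fun r _ => by ring
          _ = ∑ r, ∑ r', θstar.1 i a r * (C i r r' * vvec σ Z i (θ1.2 i r') j) :=
              Finset.sum_comm
          _ = ∑ r, θstar.1 i a r * vvec σ Z i (θstar.2 i r) j := by
              refine Finset.sum_congr rfl fun r _ => ?_
              rw [← Finset.mul_sum, hCj r]
      have hLfUt : Lf σ Z Y ((Ut, θ1.2) : PS s dy p d) = Lf σ Z Y θstar :=
        Lf_congr σ Z Y hFmUt
      have hLf1 : Lf σ Z Y θ1 = Lf σ Z Y θ0 := Lf_congr σ Z Y hFm1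
      have segB : JoinedIn {θ : PS s dy p d | Lf σ Z Y θ ≤ α} θ1 (Ut, θ1.2) := by
        refine segment_joinedIn fun t h0 h1 => ?_
        have hpt : (1 - t) • θ1 + t • ((Ut, θ1.2) : PS s dy p d)
            = ((1 - t) • θ1.1 + t • Ut, θ1.2) := Prod.ext rfl (convex_comb_self θ1.2 t)
        rw [Set.mem_setOf_eq, hpt]
        have hb := Lf_fst_convex σ Z Y θ1.1 Ut θ1.2 h0 h1
        have e1 : Lf σ Z Y ((θ1.1, θ1.2) : PS s dy p d) = Lf σ Z Y θ1 := by
          rw [Prod.mk.eta]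
        rw [e1, hLfUt] at hb
        have h8 : Lf σ Z Y θ1 ≤ α := by rw [hLf1]; exact hθ0
        have h9 : Lf σ Z Y θstar ≤ α := le_trans hc.le hθ0
        nlinarith
      have hJ1' : JoinedIn {θ : PS s dy p d | Lf σ Z Y θ ≤ α} θ0 θ1 :=
        hJ1.mono fun η hη => le_trans hη hθ0
      exact ⟨(Ut, θ1.2), hJ1'.trans segB, le_of_eq hLfUt⟩
    · exact ⟨θ0, JoinedIn.refl hθ0, not_lt.1 hc⟩
  obtain ⟨θ', hmem, hle⟩ := hkey
  refine le_trans (csInf_le ⟨0, ?_⟩ ⟨θ', hmem, rfl⟩) hle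
  rintro y ⟨θ'', -, rfl⟩
  exact hLf0 θ''
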